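/- Suppose the spreading matrix X satisfies the inverse condition X^{-1} = (P_{0:n-1}^{-T}1_b | ... | P_0^{-T}1_b)^T. Then for all 0 ≤ i, j < 2^n, the entry W(P)[j, i] equals +1 if i_b^T P_{0:n}^T (X X^T)^{-1} j_b = 0 in F_2, and equals −1 otherwise. Equivalently, { j_b : W(P)[j,i] = 1 } = ker(i_b^T P_{0:n}^T (X X^T)^{-1}). -/

import Mathlib

open Matrix

/-- Binary representation of `i` as a vector in `F_2^n`, most significant bit first. -/
def bits (n : ℕ) (i : Fin (2 ^ n)) : Fin n → ZMod 2 :=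
  fun k => if Nat.testBit i.val (n - 1 - k.val) then 1 else 0

/-- The vector `1_b = (0,...,0,1)ᵀ`. -/
def oneb (n : ℕ) : Fin n → ZMod 2 := fun k => if k.val = n - 1 then 1 else 0

/-- Permutation matrix `P(Q)` of the linear permutation `π(Q)`:
entry `(j, i)` is `1` iff `j_b = Q i_b`. -/
def permMat (n : ℕ) (Q : Matrix (Fin n) (Fin n) (ZMod 2)) :
    Matrix (Fin (2 ^ n)) (Fin (2 ^ n)) ℤ :=
  Matrix.of fun j i => if bits n j = Q.mulVec (bits n i) then 1 else 0

/-- The array of butterflies `I_{2^{n-1}} ⊗ DFT_2`. -/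
def butterflies (n : ℕ) : Matrix (Fin (2 ^ n)) (Fin (2 ^ n)) ℤ :=
  Matrix.of fun j i =>
    if j.val / 2 = i.val / 2 then (if j.val % 2 = 1 ∧ i.val % 2 = 1 then -1 else 1) else 0

/-- `W(P) = P(P₀)·(I ⊗ DFT₂)·P(P₁) ⋯ (I ⊗ DFT₂)·P(Pₙ)`. -/
def W (n : ℕ) (P : ℕ → Matrix (Fin n) (Fin n) (ZMod 2)) :
    Matrix (Fin (2 ^ n)) (Fin (2 ^ n)) ℤ :=
  permMat n (P 0) * (List.ofFn fun k : Fin n => butterflies n * permMat n (P (k.val + 1))).prod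

/-- `P_{i:j} = P_i P_{i+1} ⋯ P_j` (identity if `j < i`). -/
def Pseg {n : ℕ} (P : ℕ → Matrix (Fin n) (Fin n) (ZMod 2)) (i j : ℕ) :
    Matrix (Fin n) (Fin n) (ZMod 2) :=
  ((List.range (j + 1 - i)).map fun k => P (i + k)).prod

/-- The spreading matrix `X = (P_{0:n-1}1_b | P_{0:n-2}1_b | ⋯ | P_0 1_b)`. -/
def spread (n : ℕ) (P : ℕ → Matrix (Fin n) (Fin n) (ZMod 2)) :
    Matrix (Fin n) (Fin n) (ZMod 2) :=
  Matrix.of fun r c => (Pseg P 0 (n - 1 - c.val)).mulVec (oneb n) r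

/-- The matrix whose rows are `(P_{0:n-1}^{-T}1_b)ᵀ, ..., (P_0^{-T}1_b)ᵀ`. -/
noncomputable def spreadInvRows (n : ℕ) (P : ℕ → Matrix (Fin n) (Fin n) (ZMod 2)) :
    Matrix (Fin n) (Fin n) (ZMod 2) :=
  Matrix.of fun r c => (Pseg P 0 (n - 1 - r.val))⁻¹.transpose.mulVec (oneb n) c

/-- The Hadamard matrix `H_n` with entries `(-1)^{⟨i_b, j_b⟩}`. -/
def hadamard (n : ℕ) : Matrix (Fin (2 ^ n)) (Fin (2 ^ n)) ℤ :=
  Matrix.of fun i j => (-1) ^ (∑ k, bits n i k * bits n j k).val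

/-- The cyclic bit-rotation matrix `C_n`: ones on the superdiagonal and in the
bottom-left corner. -/
def Cmat (n : ℕ) : Matrix (Fin n) (Fin n) (ZMod 2) :=
  Matrix.of fun k l => if l.val = k.val + 1 ∨ (k.val = n - 1 ∧ l.val = 0) then 1 else 0

/-!
Expanding the matrix product, `W(P)[j,i]` is a sum over paths from `i_b` to `j_b`: each `P_k`
moves the current vector, and each butterfly may add `1_b` to it (a choice `s_t ∈ F_2`) at the
price of the sign `(-1)^(a b)`, where `a` and `b` are its least significant bits before and after.
The path condition reads `j_b = P_{0:n} i_b + X s'` with `s'` the reversal of `s`, so for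
invertible `X` exactly one path survives, namely `s' = X⁻¹ (j_b + P_{0:n} i_b)`. The inverse
condition says that the rows of `X⁻¹` are `1_bᵀ P_{0:t}⁻¹`; the off-diagonal entries of
`X⁻¹ X = 1` then give `1_bᵀ P_{k:l} 1_b = 0` for `1 ≤ k ≤ l < n`, so the bit entering each
butterfly does not depend on the earlier choices. Hence the sign of the surviving path has exponent
`∑_t (1_bᵀ P_{t+1:n} i_b) (1_bᵀ P_{0:t}⁻¹ j_b) = (X⁻¹ P_{0:n} i_b) ⬝ (X⁻¹ j_b)`, and this is
`i_bᵀ P_{0:n}ᵀ (X Xᵀ)⁻¹ j_b`.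
-/

def sgn (u : ZMod 2) : ℤ := if u = 0 then 1 else -1

lemma sgn_add (u v : ZMod 2) : sgn (u + v) = sgn u * sgn v := by
  revert u v; decide

section Bits

variable {n : ℕ}

lemma bits_injective : Function.Injective (bits n) := by
  intro x y h
  ext
  refine Nat.eq_of_testBit_eq fun p => ?_
  by_cases hp : p < n
  · have := congrFun h ⟨n - 1 - p, by omega⟩
    simp only [bits, show n - 1 - (n - 1 - p) = p by omega] at this
    cases hx : x.val.testBit p <;> cases hy : y.val.testBit p <;> simp_all
  · have h2 : 2 ^ n ≤ 2 ^ p := Nat.pow_le_pow_right (by norm_num) (by omega)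
    rw [Nat.testBit_eq_false_of_lt (x.2.trans_le h2), Nat.testBit_eq_false_of_lt (y.2.trans_le h2)]

noncomputable def bitsEquiv (n : ℕ) : Fin (2 ^ n) ≃ (Fin n → ZMod 2) :=
  Equiv.ofBijective (bits n) <|
    (Fintype.bijective_iff_injective_and_card _).mpr ⟨bits_injective, by simp⟩

@[simp]
lemma bits_bitsEquiv_symm (v : Fin n → ZMod 2) : bits n ((bitsEquiv n).symm v) = v :=
  (bitsEquiv n).apply_symm_apply v

lemma bits_eq_iff_eq_bitsEquiv_symm (x : Fin (2 ^ n)) (v : Fin n → ZMod 2) :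
    bits n x = v ↔ x = (bitsEquiv n).symm v :=
  (bitsEquiv n).eq_symm_apply.symm

lemma bits_apply_eq_bits_apply_iff (x y : Fin (2 ^ n)) (k : Fin n) :
    bits n y k = bits n x k ↔ y.val.testBit (n - 1 - k) = x.val.testBit (n - 1 - k) := by
  unfold bits
  cases y.val.testBit (n - 1 - k) <;> cases x.val.testBit (n - 1 - k) <;> decide

lemma oneb_eq_single (hn : 0 < n) : oneb n = Pi.single ⟨n - 1, by omega⟩ 1 := by
  ext k
  by_cases hk : k.val = n - 1
  · simp [oneb, show k = ⟨n - 1, by omega⟩ from Fin.ext hk]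
  · simp [oneb, hk, Fin.ext_iff]

lemma oneb_dotProduct (hn : 0 < n) (v : Fin n → ZMod 2) :
    oneb n ⬝ᵥ v = v ⟨n - 1, by omega⟩ := by
  simp [oneb_eq_single hn]

lemma oneb_dotProduct_oneb (hn : 0 < n) : oneb n ⬝ᵥ oneb n = 1 := by
  simp [oneb_dotProduct hn, oneb]

lemma oneb_dotProduct_bits (hn : 0 < n) (x : Fin (2 ^ n)) :
    oneb n ⬝ᵥ bits n x = if x.val % 2 = 1 then 1 else 0 := by
  simp [oneb_dotProduct hn, bits, Nat.testBit_zero]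

/-- `bits` lists the binary digits most significant first, so all but the last one encode
`x / 2`. -/
lemma val_div_two_eq_iff_bits_eq_of_ne_last (hn : 0 < n) (x y : Fin (2 ^ n)) :
    y.val / 2 = x.val / 2 ↔ ∀ k : Fin n, k.val ≠ n - 1 → bits n y k = bits n x k := by
  simp only [bits_apply_eq_bits_apply_iff]
  constructor
  · intro h k hk
    have := congrArg (Nat.testBit · (n - 1 - k - 1)) h
    simpa [Nat.testBit_div_two, show n - 1 - k - 1 + 1 = n - 1 - k by omega] using this
  · intro h
    refine Nat.eq_of_testBit_eq fun p => ?_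
    rw [Nat.testBit_div_two, Nat.testBit_div_two]
    by_cases hp : p + 1 < n
    · simpa [show n - 1 - (n - 2 - p) = p + 1 by omega] using
        h ⟨n - 2 - p, by omega⟩ (by simp; omega)
    · have h2 : 2 ^ n ≤ 2 ^ (p + 1) := Nat.pow_le_pow_right (by norm_num) (by omega)
      rw [Nat.testBit_eq_false_of_lt (x.2.trans_le h2),
        Nat.testBit_eq_false_of_lt (y.2.trans_le h2)]

lemma bits_eq_add_smul_oneb_iff (hn : 0 < n) (x y : Fin (2 ^ n)) (t : ZMod 2) :
    bits n y = bits n x + t • oneb n ↔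
      y.val / 2 = x.val / 2 ∧ oneb n ⬝ᵥ bits n y = oneb n ⬝ᵥ bits n x + t := by
  rw [val_div_two_eq_iff_bits_eq_of_ne_last hn, oneb_dotProduct hn, oneb_dotProduct hn, funext_iff]
  constructor
  · intro h
    refine ⟨fun k hk => ?_, by simpa [oneb] using h ⟨n - 1, by omega⟩⟩
    simpa [oneb, hk] using h k
  · rintro ⟨h, hlast⟩ k
    by_cases hk : k.val = n - 1
    · simpa [oneb, hk, show k = ⟨n - 1, by omega⟩ from Fin.ext hk] using hlast
    · simpa [oneb, hk] using h k hk

lemma butterflies_apply (hn : 0 < n) (y z : Fin (2 ^ n)) :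
    butterflies n y z = ∑ t : ZMod 2, if bits n z = bits n y + t • oneb n
      then sgn ((oneb n ⬝ᵥ bits n y) * (oneb n ⬝ᵥ bits n z)) else 0 := by
  simp only [bits_eq_add_smul_oneb_iff hn]
  by_cases h : y.val / 2 = z.val / 2
  · have hsum (a b : ZMod 2) (c : ℤ) : (∑ t : ZMod 2, if a = b + t then c else 0) = c := by
      simp only [eq_comm (a := a), ← eq_sub_iff_add_eq', Fintype.sum_ite_eq']
    simp only [h, true_and, hsum, butterflies, of_apply, if_true, oneb_dotProduct_bits hn]
    rcases Nat.mod_two_eq_zero_or_one y.val with hy | hy <;>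
      rcases Nat.mod_two_eq_zero_or_one z.val with hz | hz <;> simp [hy, hz, sgn]
  · simp [butterflies, h, Ne.symm h]

end Bits

lemma mulVec_eq_iff_eq_inv_mulVec {m R : Type*} [Fintype m] [DecidableEq m] [CommRing R]
    {Q : Matrix m m R} (hQ : IsUnit Q) (v w : m → R) : Q *ᵥ v = w ↔ v = Q⁻¹ *ᵥ w := by
  obtain ⟨_⟩ := hQ.nonempty_invertible
  constructor
  · rintro rfl
    simp [mulVec_mulVec]
  · rintro rfl
    simp [mulVec_mulVec]

section Products

variable {n : ℕ}

lemma permMat_mul_apply {Q : Matrix (Fin n) (Fin n) (ZMod 2)} (hQ : IsUnit Q)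
    (A : Matrix (Fin (2 ^ n)) (Fin (2 ^ n)) ℤ) (j i : Fin (2 ^ n)) :
    (permMat n Q * A) j i = A ((bitsEquiv n).symm (Q⁻¹ *ᵥ bits n j)) i := by
  have hcond (x : Fin (2 ^ n)) :
      bits n j = Q *ᵥ bits n x ↔ x = (bitsEquiv n).symm (Q⁻¹ *ᵥ bits n j) := by
    rw [← bits_eq_iff_eq_bitsEquiv_symm, eq_comm, mulVec_eq_iff_eq_inv_mulVec hQ]
  simp [mul_apply, permMat, hcond]

lemma butterflies_mul_apply (hn : 0 < n) (A : Matrix (Fin (2 ^ n)) (Fin (2 ^ n)) ℤ)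
    (y i : Fin (2 ^ n)) :
    (butterflies n * A) y i = ∑ t : ZMod 2,
      sgn ((oneb n ⬝ᵥ bits n y) * (oneb n ⬝ᵥ bits n y + t)) *
        A ((bitsEquiv n).symm (bits n y + t • oneb n)) i := by
  simp only [mul_apply, butterflies_apply hn, Finset.sum_mul, ite_mul, zero_mul]
  rw [Finset.sum_comm]
  simp [bits_eq_iff_eq_bitsEquiv_symm, dotProduct_add, oneb_dotProduct_oneb hn]

end Products

section Pseg

variable {n : ℕ} (Q : ℕ → Matrix (Fin n) (Fin n) (ZMod 2))

lemma Pseg_self (k : ℕ) : Pseg Q k k = Q k := by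
  simp [Pseg]

lemma Pseg_succ_shift (a b : ℕ) : Pseg (fun k => Q (k + 1)) a b = Pseg Q (a + 1) (b + 1) := by
  simp [Pseg, Nat.add_right_comm]

lemma Pseg_mul_Pseg {i j l : ℕ} (hij : i ≤ j + 1) (hjl : j ≤ l) :
    Pseg Q i j * Pseg Q (j + 1) l = Pseg Q i l := by
  have hlen : l + 1 - i = (j + 1 - i) + (l + 1 - (j + 1)) := by omega
  rw [Pseg, Pseg, Pseg, hlen, List.range_add, List.map_append, List.prod_append, List.map_map]
  congr 3
  funext k
  simp only [Function.comp_apply]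
  congr 1
  omega

lemma Pseg_zero_succ (j : ℕ) : Pseg Q 0 (j + 1) = Q 0 * Pseg Q 1 (j + 1) := by
  rw [← Pseg_mul_Pseg Q (j := 0) (by omega) (by omega), Pseg_self]

lemma isUnit_Pseg {i j : ℕ} (h : ∀ k, i ≤ k → k ≤ j → IsUnit (Q k)) :
    IsUnit (Pseg Q i j) :=
  List.prod_isUnit <| by
    simp only [List.mem_map, List.mem_range]
    rintro _ ⟨k, hk, rfl⟩
    exact h _ (by omega) (by omega)

lemma Pseg_zero_inv_mul {t l : ℕ} (hQ : IsUnit (Pseg Q 0 t)) (h : t < l) :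
    (Pseg Q 0 t)⁻¹ * Pseg Q 0 l = Pseg Q (t + 1) l := by
  obtain ⟨_⟩ := hQ.nonempty_invertible
  rw [← Pseg_mul_Pseg Q (by omega) h.le, inv_mul_cancel_left_of_invertible]

end Pseg

/-- `W n P = butterflyNetwork n n P`; separating the number `d` of butterflies from the dimension
`n` lets the network be peeled off one stage at a time. -/
def butterflyNetwork (n d : ℕ) (Q : ℕ → Matrix (Fin n) (Fin n) (ZMod 2)) :
    Matrix (Fin (2 ^ n)) (Fin (2 ^ n)) ℤ :=
  permMat n (Q 0) * (List.ofFn fun k : Fin d => butterflies n * permMat n (Q (k.val + 1))).prod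

lemma butterflyNetwork_succ (n d : ℕ) (Q : ℕ → Matrix (Fin n) (Fin n) (ZMod 2)) :
    butterflyNetwork n (d + 1) Q =
      permMat n (Q 0) * (butterflies n * butterflyNetwork n d fun k => Q (k + 1)) := by
  simp [butterflyNetwork, List.ofFn_succ, mul_assoc]

lemma eq_Pseg_mulVec_add_sum_succ_iff {n d : ℕ} (Q : ℕ → Matrix (Fin n) (Fin n) (ZMod 2))
    (hQ : IsUnit (Q 0)) (v w : Fin n → ZMod 2) (t : ZMod 2) (s : Fin d → ZMod 2) :
    v = Pseg Q 0 (d + 1) *ᵥ w +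
        (t • (Pseg Q 0 0 *ᵥ oneb n) + ∑ u : Fin d, s u • (Pseg Q 0 (u + 1) *ᵥ oneb n)) ↔
      (Q 0)⁻¹ *ᵥ v + t • oneb n =
        Pseg Q 1 (d + 1) *ᵥ w + ∑ u : Fin d, s u • (Pseg Q 1 (u + 1) *ᵥ oneb n) := by
  have hvec : Pseg Q 0 (d + 1) *ᵥ w +
      (t • (Pseg Q 0 0 *ᵥ oneb n) + ∑ u : Fin d, s u • (Pseg Q 0 (u + 1) *ᵥ oneb n)) =
      Q 0 *ᵥ (Pseg Q 1 (d + 1) *ᵥ w + ∑ u : Fin d, s u • (Pseg Q 1 (u + 1) *ᵥ oneb n) +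
        t • oneb n) := by
    simp only [Pseg_self, Pseg_zero_succ, ← mulVec_mulVec, mulVec_add, mulVec_smul, mulVec_sum]
    abel
  rw [hvec, eq_comm, mulVec_eq_iff_eq_inv_mulVec hQ, ← eq_sub_iff_add_eq, ZModModule.sub_eq_add,
    eq_comm]

theorem butterflyNetwork_apply {n : ℕ} (hn : 0 < n) (d : ℕ)
    (Q : ℕ → Matrix (Fin n) (Fin n) (ZMod 2)) (hQ : ∀ k < d, IsUnit (Q k))
    (horth : ∀ k l, 0 < k → k ≤ l → l < d → oneb n ⬝ᵥ (Pseg Q k l *ᵥ oneb n) = 0)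
    (j i : Fin (2 ^ n)) :
    butterflyNetwork n d Q j i = ∑ s : Fin d → ZMod 2,
      if bits n j = Pseg Q 0 d *ᵥ bits n i + ∑ t, s t • (Pseg Q 0 t *ᵥ oneb n)
      then sgn (∑ t : Fin d, (oneb n ⬝ᵥ (Pseg Q (t + 1) d *ᵥ bits n i)) *
        (oneb n ⬝ᵥ (Pseg Q (t + 1) d *ᵥ bits n i) + s t))
      else 0 := by
  induction d generalizing Q j with
  | zero => simp [butterflyNetwork, permMat, Pseg_self, sgn]
  | succ d ih =>
    have hQ' : ∀ k < d, IsUnit (Q (k + 1)) := fun k hk => hQ _ (by omega)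
    have horth' : ∀ k l, 0 < k → k ≤ l → l < d →
        oneb n ⬝ᵥ (Pseg (fun k => Q (k + 1)) k l *ᵥ oneb n) = 0 := fun k l hk hkl hl => by
      rw [Pseg_succ_shift]; exact horth _ _ (by omega) (by omega) (by omega)
    rw [butterflyNetwork_succ, permMat_mul_apply (hQ 0 d.succ_pos), butterflies_mul_apply hn]
    simp only [ih _ hQ' horth', Pseg_succ_shift, bits_bitsEquiv_symm, Finset.mul_sum, mul_ite,
      mul_zero]
    rw [← (Fin.consEquiv fun _ => ZMod 2).sum_comp, Fintype.sum_prod_type]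
    refine Finset.sum_congr rfl fun t _ => Finset.sum_congr rfl fun s _ => ?_
    simp only [Fin.consEquiv_apply, Fin.sum_univ_succ, Fin.cons_zero, Fin.cons_succ, Fin.val_zero,
      Fin.val_succ, zero_add, eq_Pseg_mulVec_add_sum_succ_iff Q (hQ 0 d.succ_pos)]
    split_ifs with hc
    · set a := oneb n ⬝ᵥ (Pseg Q 1 (d + 1) *ᵥ bits n i)
      -- by `horth`, the choices `s` leave the least significant bit unchanged
      have hlsb : oneb n ⬝ᵥ ((Q 0)⁻¹ *ᵥ bits n j) = a + t := by
        have h1 (u : Fin d) : oneb n ⬝ᵥ (Pseg Q 1 (u + 1) *ᵥ oneb n) = 0 :=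
          horth 1 _ one_pos (by omega) (by omega)
        have := congrArg (oneb n ⬝ᵥ ·) hc
        simp only [dotProduct_add, dotProduct_smul, dotProduct_sum, h1, oneb_dotProduct_oneb hn,
          smul_eq_mul, mul_one, mul_zero, Finset.sum_const_zero, add_zero] at this
        rw [← ZModModule.sub_eq_add, eq_sub_iff_add_eq, this]
      rw [hlsb, add_assoc, ZModModule.add_self, add_zero, sgn_add, mul_comm (a + t)]
    · rfl

section Spread

variable {n : ℕ} (P : ℕ → Matrix (Fin n) (Fin n) (ZMod 2))

lemma spread_mulVec (w : Fin n → ZMod 2) :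
    spread n P *ᵥ w = ∑ t, w (Fin.rev t) • (Pseg P 0 t *ᵥ oneb n) := by
  ext r
  simp only [mulVec, dotProduct, spread, of_apply, Finset.sum_apply, Pi.smul_apply, smul_eq_mul]
  rw [← Equiv.sum_comp Fin.revPerm]
  refine Finset.sum_congr rfl fun t _ => ?_
  simp [Fin.val_rev, show n - 1 - (n - (t + 1)) = t by omega, mul_comm]

lemma spreadInvRows_mulVec_rev (v : Fin n → ZMod 2) (t : Fin n) :
    (spreadInvRows n P *ᵥ v) (Fin.rev t) = oneb n ⬝ᵥ ((Pseg P 0 t)⁻¹ *ᵥ v) := by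
  rw [dotProduct_mulVec, ← mulVec_transpose]
  simp [mulVec, spreadInvRows, Fin.val_rev, show n - 1 - (n - (t + 1)) = t by omega]
  rfl

lemma spreadInvRows_mul_spread_rev_rev (a b : Fin n) :
    (spreadInvRows n P * spread n P) (Fin.rev a) (Fin.rev b) =
      oneb n ⬝ᵥ (((Pseg P 0 a)⁻¹ * Pseg P 0 b) *ᵥ oneb n) := by
  rw [← mulVec_mulVec, ← spreadInvRows_mulVec_rev]
  change (spreadInvRows n P *ᵥ fun q => spread n P q (Fin.rev b)) (Fin.rev a) = _
  congr 2
  funext q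
  simp [spread, Fin.val_rev, show n - 1 - (n - (b + 1)) = b by omega]

variable {P}

/-- The off-diagonal entries of `X⁻¹ X = 1`. -/
lemma oneb_dotProduct_Pseg_mulVec_oneb_eq_zero (hX : IsUnit (spread n P))
    (hXinv : (spread n P)⁻¹ = spreadInvRows n P) {a l : ℕ} (hseg : IsUnit (Pseg P 0 a))
    (hal : a < l) (hl : l < n) :
    oneb n ⬝ᵥ (Pseg P (a + 1) l *ᵥ oneb n) = 0 := by
  have hYX : spreadInvRows n P * spread n P = 1 :=
    hXinv ▸ nonsing_inv_mul _ ((isUnit_iff_isUnit_det _).mp hX)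
  have hne : Fin.rev (⟨a, by omega⟩ : Fin n) ≠ Fin.rev ⟨l, hl⟩ := by
    simp [Fin.ext_iff]; omega
  have := spreadInvRows_mul_spread_rev_rev P ⟨a, by omega⟩ ⟨l, hl⟩
  rwa [hYX, one_apply_ne hne, Pseg_zero_inv_mul P hseg hal, eq_comm] at this

lemma eq_add_sum_smul_Pseg_iff (hX : IsUnit (spread n P))
    (hXinv : (spread n P)⁻¹ = spreadInvRows n P) (u v s : Fin n → ZMod 2) :
    v = u + ∑ t, s t • (Pseg P 0 t *ᵥ oneb n) ↔
      s = fun t : Fin n => oneb n ⬝ᵥ ((Pseg P 0 t)⁻¹ *ᵥ (v + u)) := by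
  have hsum : ∑ t, s t • (Pseg P 0 t *ᵥ oneb n) = spread n P *ᵥ fun r => s (Fin.rev r) := by
    simp [spread_mulVec]
  rw [hsum, ← sub_eq_iff_eq_add', ZModModule.sub_eq_add, eq_comm,
    mulVec_eq_iff_eq_inv_mulVec hX, hXinv]
  constructor
  · intro h
    funext t
    simpa [spreadInvRows_mulVec_rev] using congrFun h (Fin.rev t)
  · rintro rfl
    funext r
    simpa using (spreadInvRows_mulVec_rev P _ (Fin.rev r)).symm

lemma dotProduct_mulVec_spread_gram_inv (hXinv : (spread n P)⁻¹ = spreadInvRows n P)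
    (M : Matrix (Fin n) (Fin n) (ZMod 2)) (u v : Fin n → ZMod 2) :
    u ⬝ᵥ ((Mᵀ * (spread n P * (spread n P)ᵀ)⁻¹) *ᵥ v) =
      ∑ t : Fin n,
        (oneb n ⬝ᵥ ((Pseg P 0 t)⁻¹ *ᵥ (M *ᵥ u))) * (oneb n ⬝ᵥ ((Pseg P 0 t)⁻¹ *ᵥ v)) := by
  rw [Matrix.mul_inv_rev, ← transpose_nonsing_inv, hXinv, ← mulVec_mulVec, ← mulVec_mulVec,
    dotProduct_mulVec, vecMul_transpose, dotProduct_mulVec, vecMul_transpose, dotProduct,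
    ← Equiv.sum_comp Fin.revPerm]
  simp [spreadInvRows_mulVec_rev]

end Spread

/-- If the spreading matrix satisfies the inverse condition
`X⁻¹ = (P_{0:n-1}^{-T}1_b | ⋯ | P_0^{-T}1_b)ᵀ`, then
`W(P)[j,i] = +1` if `i_bᵀ P_{0:n}ᵀ (XXᵀ)⁻¹ j_b = 0` in `F_2`, and `−1` otherwise. -/
theorem entries_formula (n : ℕ) (P : ℕ → Matrix (Fin n) (Fin n) (ZMod 2))
    (hP : ∀ k ≤ n, IsUnit (P k)) (hX : IsUnit (spread n P))
    (hXinv : (spread n P)⁻¹ = spreadInvRows n P) (i j : Fin (2 ^ n)) :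
    W n P j i =
      if bits n i ⬝ᵥ ((Pseg P 0 n)ᵀ * (spread n P * (spread n P)ᵀ)⁻¹).mulVec (bits n j) = 0
      then 1 else -1 := by
  rcases Nat.eq_zero_or_pos n with rfl | hn
  · simp [W, permMat, dotProduct, eq_iff_true_of_subsingleton]
  have hseg (t : ℕ) (ht : t < n) : IsUnit (Pseg P 0 t) :=
    isUnit_Pseg P fun k _ hk => hP k (by omega)
  have horth (k l : ℕ) (hk : 0 < k) (hkl : k ≤ l) (hl : l < n) :
      oneb n ⬝ᵥ (Pseg P k l *ᵥ oneb n) = 0 := by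
    obtain ⟨a, rfl⟩ := Nat.exists_eq_add_one.mpr hk
    exact oneb_dotProduct_Pseg_mulVec_oneb_eq_zero hX hXinv (hseg a (by omega)) hkl hl
  have hsplit (t : Fin n) : (Pseg P 0 t)⁻¹ * Pseg P 0 n = Pseg P (t + 1) n :=
    Pseg_zero_inv_mul P (hseg t t.2) t.2
  rw [show W n P = butterflyNetwork n n P from rfl,
    butterflyNetwork_apply hn n P (fun k hk => hP k hk.le) horth,
    dotProduct_mulVec_spread_gram_inv hXinv]
  simp only [eq_add_sum_smul_Pseg_iff hX hXinv, Fintype.sum_ite_eq', mulVec_add, dotProduct_add,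
    mulVec_mulVec, hsplit]
  exact congrArg sgn <| Finset.sum_congr rfl fun t _ => by
    rw [add_left_comm, ZModModule.add_self, add_zero]
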